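/- Fix an integer σ ≥ 1. Let G_ppl be an Erdős–Rényi random graph on a vertex set V of size N, with edge probability p ∈ (0, 1]. Call S ⊆ V unstoppable if every vertex of V \ S has at least σ G_ppl-neighbors in S. If S ⊆ V satisfies |S| ≥ α (log N)/p for some α > σ, then P_p(S is unstoppable) ≥ 1 − 3σ N^{1 − α/σ}. -/

import Mathlib

open scoped Classical
open Filter

noncomputable section

namespace JigsawPerc

variable {V : Type*}

/-- Number of `G`-neighbors of `v` inside `S` (not including `v`). -/
def nbrCount (G : SimpleGraph V) (v : V) (S : Set V) : ℕ :=
  {u ∈ S | G.Adj v u}.ncard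

/-- One-directional merging condition, (J1)–(J3), from part `Wi` toward part `Wj`. -/
def LinkedDir (Gpuz Gppl : SimpleGraph V) (σ τ : ℕ) (θ : ℕ∞) (Wi Wj : Set V) : Prop :=
  (∃ v₁ ∈ Wi, ∃ v₂ ∈ Wj, Gppl.Adj v₁ v₂ ∧ Gpuz.Adj v₁ v₂) ∨
  (∃ v₁ ∈ Wi, θ ≤ (nbrCount Gpuz v₁ Wj : ℕ∞)) ∨
  (∃ v₁ ∈ Wi, σ ≤ nbrCount Gppl v₁ Wj ∧ τ ≤ nbrCount Gpuz v₁ Wj)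

/-- Two distinct parts are linked when (J1), (J2) or (J3) holds in one of the two directions. -/
def Linked (Gpuz Gppl : SimpleGraph V) (σ τ : ℕ) (θ : ℕ∞) (Wi Wj : Set V) : Prop :=
  Wi ≠ Wj ∧ (LinkedDir Gpuz Gppl σ τ θ Wi Wj ∨ LinkedDir Gpuz Gppl σ τ θ Wj Wi)

/-- One step of the jigsaw dynamics: merge all parts lying in the same connected
component of the `Linked` graph on parts. -/
def step (Gpuz Gppl : SimpleGraph V) (σ τ : ℕ) (θ : ℕ∞) (P : Set (Set V)) : Set (Set V) :=
  { U | ∃ W ∈ P, U = ⋃₀ {W' | W' ∈ P ∧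
      Relation.EqvGen (fun A B => A ∈ P ∧ B ∈ P ∧ Linked Gpuz Gppl σ τ θ A B) W W'} }

/-- The partition at time `t`, started from the partition into singletons. -/
def partAt (Gpuz Gppl : SimpleGraph V) (σ τ : ℕ) (θ : ℕ∞) (t : ℕ) : Set (Set V) :=
  (step Gpuz Gppl σ τ θ)^[t] {S : Set V | ∃ v, S = {v}}

/-- The event that the puzzle is solved: at some time all vertices form one single part. -/
def Solve (Gpuz Gppl : SimpleGraph V) (σ τ : ℕ) (θ : ℕ∞) : Prop :=
  ∃ t, partAt Gpuz Gppl σ τ θ t = {Set.univ}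

/-- `A` is internally solved: jigsaw percolation on the induced subgraphs solves `A`. -/
def SolveIn (Gpuz Gppl : SimpleGraph V) (σ τ : ℕ) (θ : ℕ∞) (A : Set V) : Prop :=
  Solve (Gpuz.induce A) (Gppl.induce A) σ τ θ

/-- The people graph determined by a configuration of the off-diagonal edge indicators. -/
def graphOf (ω : {e : Sym2 V // ¬ e.IsDiag} → Bool) : SimpleGraph V :=
  SimpleGraph.fromEdgeSet {e | ∃ h : ¬ e.IsDiag, ω ⟨e, h⟩ = true}

/-- Probability, under the Erdős–Rényi measure with edge probability `p` on the vertex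
set `V`, of the people-graph event `A`. -/
def erProb [Fintype V] (p : ℝ) (A : SimpleGraph V → Prop) : ℝ :=
  ∑ ω : {e : Sym2 V // ¬ e.IsDiag} → Bool,
    if A (graphOf ω) then ∏ e, (if ω e then p else 1 - p) else 0

/-- Probability that jigsaw percolation with puzzle graph `Gpuz`, Erdős–Rényi people graph
with edge probability `p`, and thresholds `σ, τ, θ` solves the puzzle. -/
def solveProb [Fintype V] (Gpuz : SimpleGraph V) (σ τ : ℕ) (θ : ℕ∞) (p : ℝ) : ℝ :=
  erProb p fun Gppl => Solve Gpuz Gppl σ τ θ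

/-- The `d`-dimensional discrete torus on `ℤ_n^d`: nearest-neighbor adjacency with
periodic boundary conditions. -/
def torus (d n : ℕ) : SimpleGraph (Fin d → Fin n) :=
  SimpleGraph.fromRel fun x y =>
    ∃ i, (∀ j, j ≠ i → x j = y j) ∧ ((x i : ℕ) + 1) % n = (y i : ℕ)

/-- The ring (cycle) graph on `ℤ_n`. -/
def ring (n : ℕ) : SimpleGraph (Fin n) :=
  SimpleGraph.fromRel fun x y => ((x : ℕ) + 1) % n = (y : ℕ)

/-- `P(Poisson(x) ≥ σ) = e^{-x} ∑_{i=σ}^∞ x^i/i!`. -/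
def poissonTail (σ : ℕ) (x : ℝ) : ℝ :=
  Real.exp (-x) * ∑' i : ℕ, x ^ (σ + i) / (σ + i).factorial

/-- `g_σ(x) = -log P(Poisson(x) ≥ σ)`. -/
def gPois (σ : ℕ) (x : ℝ) : ℝ := -Real.log (poissonTail σ x)

/-- `λ_σ = ∫_0^∞ g_σ(x) dx`. -/
def lambdaC (σ : ℕ) : ℝ := ∫ x in Set.Ioi (0 : ℝ), gPois σ x

/-- `ν_σ = ∫_0^∞ -log(1 - exp(-x^{2σ+1}/σ!)) dx`. -/
def nuC (σ : ℕ) : ℝ :=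
  ∫ x in Set.Ioi (0 : ℝ), -Real.log (1 - Real.exp (-(x ^ (2 * σ + 1) / (σ.factorial : ℝ))))

/-- `S` is unstoppable for the people graph `G`: every vertex outside `S` has at least
`σ` `G`-neighbors in `S`. -/
def Unstoppable (G : SimpleGraph V) (σ : ℕ) (S : Set V) : Prop :=
  ∀ v ∉ S, σ ≤ nbrCount G v S

/-!
Split `S` into `σ` disjoint blocks of `k = ⌊|S|/σ⌋` vertices. A vertex outside `S` with fewer
than `σ` neighbours in `S` has no neighbour in one of the blocks, an event of probability
`(1 - p)^k ≤ e^{-pk} ≤ e^p N^{-α/σ} ≤ 3 N^{-α/σ}` for each of the at most `Nσ` pairs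
(vertex, block), and the union bound concludes.
-/

open Function

lemma card_le_nbrCount [Finite V] {κ : Type*} [Fintype κ] {G : SimpleGraph V} {v : V}
    {S : Set V} {g : κ → V} (hg : Injective g) (hgS : ∀ j, g j ∈ S)
    (hadj : ∀ j, G.Adj v (g j)) : Fintype.card κ ≤ nbrCount G v S := by
  rw [← Nat.card_eq_fintype_card, nbrCount, ← Nat.card_coe_set_eq]
  exact Nat.card_le_card_of_injective (fun j => ⟨g j, hgS j, hadj j⟩)
    fun i j h => hg (congrArg Subtype.val h)

lemma exists_injective_prod_fin_mem [Finite V] {S : Set V} {a b : ℕ} (h : a * b ≤ S.ncard) :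
    ∃ f : Fin a × Fin b → V, Injective f ∧ ∀ x, f x ∈ S := by
  have := Fintype.ofFinite S
  obtain ⟨f⟩ := Function.Embedding.nonempty_of_card_le (α := Fin a × Fin b) (β := S) (by
    rwa [Fintype.card_prod, Fintype.card_fin, Fintype.card_fin, ← Nat.card_eq_fintype_card,
      Nat.card_coe_set_eq])
  exact ⟨Subtype.val ∘ f, Subtype.val_injective.comp f.injective, fun x => Subtype.prop (f x)⟩

lemma graphOf_adj (ω : {e : Sym2 V // ¬ e.IsDiag} → Bool) (v u : V) :
    (graphOf ω).Adj v u ↔ ∃ h : ¬ s(v, u).IsDiag, ω ⟨s(v, u), h⟩ = true := by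
  rw [graphOf, SimpleGraph.fromEdgeSet_adj, Set.mem_ofPred_eq, and_iff_left_iff_imp]
  rintro ⟨h, -⟩
  simpa using h

section ErdosRenyi

variable [Fintype V] {p : ℝ}

def erWeight (p : ℝ) (ω : {e : Sym2 V // ¬ e.IsDiag} → Bool) : ℝ :=
  ∏ e, if ω e then p else 1 - p

lemma erProb_eq_sum_erWeight (p : ℝ) (A : SimpleGraph V → Prop) :
    erProb p A = ∑ ω, if A (graphOf ω) then erWeight p ω else 0 :=
  rfl

lemma erWeight_nonneg (hp0 : 0 ≤ p) (hp1 : p ≤ 1) (ω : {e : Sym2 V // ¬ e.IsDiag} → Bool) :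
    0 ≤ erWeight p ω :=
  Finset.prod_nonneg fun e _ => by split <;> linarith

-- The sum factorizes over the edges: each edge of `E₀` contributes `1 - p`, any other `p + (1 - p)`.
lemma sum_erWeight_of_forall_false (p : ℝ) (E₀ : Finset {e : Sym2 V // ¬ e.IsDiag}) :
    ∑ ω, (if ∀ e ∈ E₀, ω e = false then erWeight p ω else 0) = (1 - p) ^ E₀.card := by
  let f : {e : Sym2 V // ¬ e.IsDiag} → Bool → ℝ := fun e b =>
    if b then (if e ∈ E₀ then 0 else p) else 1 - p
  have hprod : ∀ ω : {e : Sym2 V // ¬ e.IsDiag} → Bool,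
      (if ∀ e ∈ E₀, ω e = false then erWeight p ω else 0) = ∏ e, f e (ω e) := by
    intro ω
    split_ifs with h
    · refine Finset.prod_congr rfl fun e _ => ?_
      by_cases he : e ∈ E₀ <;> simp [f, he, h]
    · obtain ⟨e, he, hωe⟩ := not_forall₂.mp h
      exact (Finset.prod_eq_zero (Finset.mem_univ e) (by simp_all [f])).symm
  have hsum : ∀ e, ∑ b, f e b = if e ∈ E₀ then 1 - p else 1 := by
    intro e
    by_cases he : e ∈ E₀ <;> simp [f, he]
  simp_rw [hprod, ← Fintype.prod_sum, hsum, Finset.prod_ite_mem, Finset.univ_inter,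
    Finset.prod_const]

lemma sum_erWeight (p : ℝ) : ∑ ω, erWeight (V := V) p ω = 1 := by
  simpa using sum_erWeight_of_forall_false (V := V) p ∅

lemma erProb_not (p : ℝ) (A : SimpleGraph V → Prop) :
    erProb p (fun G => ¬ A G) = 1 - erProb p A := by
  rw [eq_sub_iff_add_eq, erProb_eq_sum_erWeight, erProb_eq_sum_erWeight,
    ← Finset.sum_add_distrib]
  refine (Finset.sum_congr rfl fun ω _ => ?_).trans (sum_erWeight p)
  by_cases h : A (graphOf ω) <;> simp [h]

lemma erProb_le_sum_of_imp_exists {ι : Type*} (hp0 : 0 ≤ p) (hp1 : p ≤ 1)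
    {A : SimpleGraph V → Prop} (s : Finset ι) (B : ι → SimpleGraph V → Prop)
    (h : ∀ G, A G → ∃ i ∈ s, B i G) : erProb p A ≤ ∑ i ∈ s, erProb p (B i) := by
  simp only [erProb_eq_sum_erWeight]
  rw [Finset.sum_comm]
  refine Finset.sum_le_sum fun ω _ => ?_
  have hnonneg : ∀ i ∈ s, 0 ≤ if B i (graphOf ω) then erWeight p ω else 0 := fun i _ => by
    split_ifs
    exacts [erWeight_nonneg hp0 hp1 ω, le_rfl]
  split_ifs with hA
  · obtain ⟨i, hi, hB⟩ := h _ hA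
    calc erWeight p ω = if B i (graphOf ω) then erWeight p ω else 0 := (if_pos hB).symm
      _ ≤ _ := Finset.single_le_sum hnonneg hi
  · exact Finset.sum_nonneg hnonneg

lemma erProb_forall_not_adj {ι : Type*} [Fintype ι] (p : ℝ) (v : V) {g : ι → V}
    (hg : Injective g) (hv : ∀ i, v ≠ g i) :
    erProb p (fun G => ∀ i, ¬ G.Adj v (g i)) = (1 - p) ^ Fintype.card ι := by
  let e : ι → {e : Sym2 V // ¬ e.IsDiag} := fun i => ⟨s(v, g i), by simpa using hv i⟩
  have he : Injective e := fun i j h => hg (Sym2.congr_right.mp (congrArg Subtype.val h))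
  rw [← Finset.card_univ, ← Finset.card_image_of_injective _ he,
    ← sum_erWeight_of_forall_false, erProb_eq_sum_erWeight]
  refine Finset.sum_congr rfl fun ω _ => ?_
  simp [graphOf_adj, e, hv]

lemma erProb_not_unstoppable_le (hp0 : 0 ≤ p) (hp1 : p ≤ 1) (σ : ℕ) (S : Set V) :
    erProb p (fun G => ¬ Unstoppable G σ S) ≤
      Fintype.card V * σ * (1 - p) ^ (S.ncard / σ) := by
  obtain ⟨f, hf, hfS⟩ := exists_injective_prod_fin_mem (Nat.mul_div_le S.ncard σ)
  set T : Finset (V × Fin σ) := Finset.univ.filter (· ∉ S) ×ˢ Finset.univ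
  have hcover : ∀ G : SimpleGraph V, ¬ Unstoppable G σ S →
      ∃ x ∈ T, ∀ i, ¬ G.Adj x.1 (f (x.2, i)) := by
    intro G hG
    simp only [Unstoppable, not_forall, not_le] at hG
    obtain ⟨v, hv, hlt⟩ := hG
    by_contra! hblock
    choose i hi using fun j => hblock (v, j) (by simp [T, hv])
    have := card_le_nbrCount (g := fun j => f (j, i j))
      (fun j j' h => congrArg Prod.fst (hf h)) (fun j => hfS _) hi
    rw [Fintype.card_fin] at this
    omega
  have hmiss : ∀ x ∈ T, erProb p (fun G => ∀ i, ¬ G.Adj x.1 (f (x.2, i))) =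
      (1 - p) ^ (S.ncard / σ) := by
    intro x hx
    have hx1 : x.1 ∉ S := by simpa [T] using hx
    simpa using erProb_forall_not_adj p x.1 (hf.comp (Prod.mk_right_injective x.2))
      fun i h => hx1 (h ▸ hfS _)
  have hT : (T.card : ℝ) ≤ Fintype.card V * σ := by
    have : T.card ≤ Fintype.card V * σ := by
      simpa [T] using Nat.mul_le_mul_right σ (Finset.card_filter_le Finset.univ (· ∉ S))
    exact_mod_cast this
  calc erProb p (fun G => ¬ Unstoppable G σ S)
      ≤ ∑ x ∈ T, erProb p (fun G => ∀ i, ¬ G.Adj x.1 (f (x.2, i))) :=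
        erProb_le_sum_of_imp_exists hp0 hp1 T _ hcover
    _ = T.card * (1 - p) ^ (S.ncard / σ) := by
        rw [Finset.sum_congr rfl hmiss, Finset.sum_const, nsmul_eq_mul]
    _ ≤ Fintype.card V * σ * (1 - p) ^ (S.ncard / σ) := by
        gcongr

end ErdosRenyi

lemma one_sub_pow_le_exp {p : ℝ} (hp1 : p ≤ 1) (k : ℕ) : (1 - p) ^ k ≤ Real.exp (-(p * k)) := by
  calc (1 - p) ^ k ≤ Real.exp (-p) ^ k :=
        pow_le_pow_left₀ (by linarith) (Real.one_sub_le_exp_neg p) k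
    _ = Real.exp (-(p * k)) := by rw [← Real.exp_nat_mul]; ring_nf

lemma natCast_mul_one_sub_pow_div_le {N σ m : ℕ} {p α : ℝ} (hp0 : 0 ≤ p) (hp1 : p ≤ 1)
    (h : α * Real.log N ≤ p * m) :
    (N : ℝ) * σ * (1 - p) ^ (m / σ) ≤ 3 * σ * (N : ℝ) ^ (1 - α / σ) := by
  rcases Nat.eq_zero_or_pos σ with rfl | hσ
  · simp
  rcases Nat.eq_zero_or_pos N with rfl | hN
  · simp only [CharP.cast_eq_zero, zero_mul]
    positivity
  have hσR : (0 : ℝ) < σ := by exact_mod_cast hσ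
  have hNR : (0 : ℝ) < N := by exact_mod_cast hN
  set k := m / σ
  have hm : (m : ℝ) ≤ σ * (k + 1) := by
    have : m ≤ σ * (k + 1) := (Nat.lt_mul_div_succ m hσ).le
    exact_mod_cast this
  have hexp : -(p * k) ≤ p + -(α / σ) * Real.log N := by
    have : α / σ * Real.log N ≤ p * (k + 1) := by
      rw [div_mul_eq_mul_div, div_le_iff₀ hσR]
      nlinarith
    linarith
  have hexp_le_three : Real.exp p ≤ 3 := by
    have := Real.exp_one_lt_d9
    have := Real.exp_le_exp.mpr hp1
    linarith
  calc (N : ℝ) * σ * (1 - p) ^ k ≤ N * σ * Real.exp (-(p * k)) := by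
        gcongr
        exact one_sub_pow_le_exp hp1 k
    _ ≤ N * σ * (Real.exp p * Real.exp (-(α / σ) * Real.log N)) := by
        rw [← Real.exp_add]
        gcongr
    _ ≤ N * σ * (3 * (N : ℝ) ^ (-(α / σ))) := by
        rw [Real.rpow_def_of_pos hNR, mul_comm (Real.log N)]
        gcongr
    _ = 3 * σ * (N : ℝ) ^ (1 - α / σ) := by
        rw [sub_eq_add_neg, Real.rpow_add hNR, Real.rpow_one]
        ring

theorem stmt18_general {V : Type*} [Fintype V] (σ : ℕ) (p α : ℝ)
    (hp0 : 0 < p) (hp1 : p ≤ 1) (S : Set V)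
    (hS : α * Real.log (Fintype.card V) / p ≤ (S.ncard : ℝ)) :
    1 - 3 * σ * (Fintype.card V : ℝ) ^ ((1 : ℝ) - α / σ) ≤
      erProb p (fun G => Unstoppable G σ S) := by
  have hαS : α * Real.log (Fintype.card V) ≤ p * S.ncard := by
    rwa [div_le_iff₀ hp0, mul_comm (S.ncard : ℝ)] at hS
  have hbad := erProb_not_unstoppable_le hp0.le hp1 σ S
  have hcompl := erProb_not p (fun G => Unstoppable G σ S)
  have := natCast_mul_one_sub_pow_div_le (σ := σ) hp0.le hp1 hαS
  linarith

/-- Lemma 2.6: in an Erdős–Rényi graph with edge probability `p` on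
`N` vertices, a set `S` of size at least `α log N / p` with `α > σ` is unstoppable with
probability at least `1 − 3σ N^{1−α/σ}`. -/
theorem stmt18 {V : Type*} [Fintype V] (σ : ℕ) (hσ : 1 ≤ σ) (p α : ℝ)
    (hp0 : 0 < p) (hp1 : p ≤ 1) (hα : (σ : ℝ) < α) (S : Set V)
    (hS : α * Real.log (Fintype.card V) / p ≤ (S.ncard : ℝ)) :
    1 - 3 * σ * (Fintype.card V : ℝ) ^ ((1 : ℝ) - α / σ) ≤
      erProb p (fun G => Unstoppable G σ S) :=
  stmt18_general σ p α hp0 hp1 S hS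

end JigsawPerc
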